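/- arXiv:1607.08540 — 5 statements merged into one kernel-verified Lean document; each statement's English description precedes it below -/
import Mathlib

section
/- The adhesive extension P of p and p' satisfies the conditional independence (X_{I∖J} ⊥ X_{J∖I} | X_{I∩J}): for all values, P(x_{I∖J}, x_{J∖I}, x_{I∩J}) = P(x_{I∖J} | x_{I∩J}) · P(x_{J∖I} | x_{I∩J}) · P(x_{I∩J}). -/
open Finset

variable {ι V : Type} [DecidableEq ι] [Fintype V] [DecidableEq V]

/-- Restriction of an assignment of values on `S` to a subset `T ⊆ S`. -/
def restr {S T : Finset ι} (h : T ⊆ S) (w : ↥S → V) : ↥T → V :=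
  fun i => w ⟨i.1, h i.2⟩

/-- Marginal of a distribution on the variables in `S` to the variables in `T ⊆ S`. -/
noncomputable def marg {S T : Finset ι} (p : (↥S → V) → ℝ) (h : T ⊆ S) :
    (↥T → V) → ℝ :=
  fun z => ∑ w : ↥S → V, if restr h w = z then p w else 0

/-- The adhesive extension of `p` (a distribution on `I`) and `p'` (a distribution on `J`):
`P(x_{I∪J}) = 0` if `p(x_{I∩J}) = 0` and `P(x_{I∪J}) = p(x_I)·p'(x_J)/p(x_{I∩J})` otherwise. -/
noncomputable def adh {I J : Finset ι} (p : (↥I → V) → ℝ) (p' : (↥J → V) → ℝ) :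
    (↥(I ∪ J) → V) → ℝ :=
  fun w =>
    if marg p (inter_subset_left : I ∩ J ⊆ I)
        (restr ((inter_subset_left.trans subset_union_left) : I ∩ J ⊆ I ∪ J) w) = 0 then 0
    else
      p (restr (subset_union_left : I ⊆ I ∪ J) w) *
        p' (restr (subset_union_right : J ⊆ I ∪ J) w) /
        marg p (inter_subset_left : I ∩ J ⊆ I)
          (restr ((inter_subset_left.trans subset_union_left) : I ∩ J ⊆ I ∪ J) w)

lemma restr_restr {S T U : Finset ι} (h1 : T ⊆ S) (h2 : U ⊆ T) (w : ↥S → V) :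
    restr h2 (restr h1 w) = restr (h2.trans h1) w := rfl

lemma marg_marg {S T U : Finset ι} (f : (↥S → V) → ℝ) (h1 : T ⊆ S) (h2 : U ⊆ T) :
    marg (marg f h1) h2 = marg f (h2.trans h1) := by
  funext z
  unfold marg
  have step : ∀ u : ↥T → V,
      (if restr h2 u = z then ∑ w : ↥S → V, if restr h1 w = u then f w else 0 else 0)
      = ∑ w : ↥S → V, if restr h1 w = u then if restr h2 u = z then f w else 0 else 0 := by
    intro u; split_ifs with hc <;> simp [hc]
  rw [Finset.sum_congr rfl (fun u _ => step u), Finset.sum_comm]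
  refine Finset.sum_congr rfl fun w _ => ?_
  rw [Finset.sum_ite_eq Finset.univ (restr h1 w) (fun u => if restr h2 u = z then f w else 0)]
  simp [restr_restr]
  rfl

lemma marg_zero {S T : Finset ι} (f : (↥S → V) → ℝ) (h : T ⊆ S)
    (hf : ∀ w, 0 ≤ f w) {z : ↥T → V} (hz : marg f h z = 0) :
    ∀ w, restr h w = z → f w = 0 := by
  intro w hw
  have h0 : ∀ u ∈ Finset.univ, (0:ℝ) ≤ if restr h u = z then f u else 0 := by
    intro u _; split_ifs; exact hf u; exact le_refl 0
  have := (Finset.sum_eq_zero_iff_of_nonneg h0).mp hz w (Finset.mem_univ w)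
  rwa [if_pos hw] at this

def glueI {I J : Finset ι} (x : ↥I → V) (y : ↥J → V) : ↥(I ∪ J) → V :=
  fun i => if h : i.1 ∈ I then x ⟨i.1, h⟩
    else y ⟨i.1, (Finset.mem_union.mp i.2).resolve_left h⟩

def glueJ {I J : Finset ι} (y : ↥J → V) (x : ↥I → V) : ↥(I ∪ J) → V :=
  fun i => if h : i.1 ∈ J then y ⟨i.1, h⟩
    else x ⟨i.1, (Finset.mem_union.mp i.2).resolve_right h⟩

lemma sum_fiber_left {I J : Finset ι} (x : ↥I → V) (g : (↥J → V) → ℝ) :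
    ∑ w : ↥(I ∪ J) → V,
      (if restr (subset_union_left : I ⊆ I ∪ J) w = x
        then g (restr (subset_union_right : J ⊆ I ∪ J) w) else 0)
    = ∑ y : ↥J → V,
      (if restr (inter_subset_right : I ∩ J ⊆ J) y
          = restr (inter_subset_left : I ∩ J ⊆ I) x then g y else 0) := by
  rw [← Finset.sum_filter, ← Finset.sum_filter]
  refine Finset.sum_bij' (fun w _ => restr (subset_union_right : J ⊆ I ∪ J) w)
    (fun y _ => glueI x y) ?_ ?_ ?_ ?_ ?_
  · intro w hw
    simp only [Finset.mem_filter, Finset.mem_univ, true_and] at hw ⊢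
    rw [← hw]; rfl
  · intro y hy
    simp only [Finset.mem_filter, Finset.mem_univ, true_and] at hy ⊢
    funext i
    exact dif_pos i.2
  · intro w hw
    simp only [Finset.mem_filter, Finset.mem_univ, true_and] at hw
    funext i
    rcases Finset.mem_union.mp i.2 with hi | hi
    · show (if h : i.1 ∈ I then x ⟨i.1, h⟩ else _) = w i
      rw [dif_pos hi, ← hw]; rfl
    · by_cases hiI : i.1 ∈ I
      · show (if h : i.1 ∈ I then x ⟨i.1, h⟩ else _) = w i
        rw [dif_pos hiI, ← hw]; rfl
      · show (if h : i.1 ∈ I then x ⟨i.1, h⟩ else _) = w i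
        rw [dif_neg hiI]; rfl
  · intro y hy
    simp only [Finset.mem_filter, Finset.mem_univ, true_and] at hy
    funext i
    show (if h : i.1 ∈ I then x ⟨i.1, h⟩ else _) = y i
    by_cases hiI : i.1 ∈ I
    · rw [dif_pos hiI]
      have hmem : i.1 ∈ I ∩ J := Finset.mem_inter.mpr ⟨hiI, i.2⟩
      have := congrFun hy ⟨i.1, hmem⟩
      exact (this.symm.trans rfl)
    · rw [dif_neg hiI]
  · intro w _; rfl

lemma sum_fiber_right {I J : Finset ι} (y : ↥J → V) (g : (↥I → V) → ℝ) :
    ∑ w : ↥(I ∪ J) → V,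
      (if restr (subset_union_right : J ⊆ I ∪ J) w = y
        then g (restr (subset_union_left : I ⊆ I ∪ J) w) else 0)
    = ∑ x : ↥I → V,
      (if restr (inter_subset_left : I ∩ J ⊆ I) x
          = restr (inter_subset_right : I ∩ J ⊆ J) y then g x else 0) := by
  rw [← Finset.sum_filter, ← Finset.sum_filter]
  refine Finset.sum_bij' (fun w _ => restr (subset_union_left : I ⊆ I ∪ J) w)
    (fun x _ => glueJ y x) ?_ ?_ ?_ ?_ ?_
  · intro w hw
    simp only [Finset.mem_filter, Finset.mem_univ, true_and] at hw ⊢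
    rw [← hw]; rfl
  · intro x hx
    simp only [Finset.mem_filter, Finset.mem_univ, true_and] at hx ⊢
    funext i
    exact dif_pos i.2
  · intro w hw
    simp only [Finset.mem_filter, Finset.mem_univ, true_and] at hw
    funext i
    show (if h : i.1 ∈ J then y ⟨i.1, h⟩ else _) = w i
    by_cases hiJ : i.1 ∈ J
    · rw [dif_pos hiJ, ← hw]; rfl
    · rw [dif_neg hiJ]; rfl
  · intro x hx
    simp only [Finset.mem_filter, Finset.mem_univ, true_and] at hx
    funext i
    show (if h : i.1 ∈ J then y ⟨i.1, h⟩ else _) = x i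
    by_cases hiJ : i.1 ∈ J
    · rw [dif_pos hiJ]
      have hmem : i.1 ∈ I ∩ J := Finset.mem_inter.mpr ⟨i.2, hiJ⟩
      exact (congrFun hx ⟨i.1, hmem⟩).symm
    · rw [dif_neg hiJ]
  · intro w _; rfl


lemma margI {I J : Finset ι} (p : (↥I → V) → ℝ) (p' : (↥J → V) → ℝ)
    (hp0 : ∀ w, 0 ≤ p w)
    (hcons : marg p (inter_subset_left : I ∩ J ⊆ I) =
             marg p' (inter_subset_right : I ∩ J ⊆ J)) :
    marg (adh p p') (subset_union_left : I ⊆ I ∪ J) = p := by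
  funext x
  have key : ∀ w : ↥(I ∪ J) → V, restr (subset_union_left : I ⊆ I ∪ J) w = x →
      restr ((inter_subset_left.trans subset_union_left) : I ∩ J ⊆ I ∪ J) w
        = restr (inter_subset_left : I ∩ J ⊆ I) x := by
    intro w hw; rw [← hw]; rfl
  by_cases hm : marg p (inter_subset_left : I ∩ J ⊆ I)
      (restr (inter_subset_left : I ∩ J ⊆ I) x) = 0
  · have hx : p x = 0 := marg_zero p inter_subset_left hp0 hm x rfl
    rw [hx]
    unfold marg
    apply Finset.sum_eq_zero
    intro w _
    split_ifs with h1
    · unfold adh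
      rw [if_pos (by rw [key w h1]; exact hm)]
    · rfl
  · unfold marg
    have step : ∀ w : ↥(I ∪ J) → V,
        (if restr (subset_union_left : I ⊆ I ∪ J) w = x then adh p p' w else 0)
        = (p x / marg p (inter_subset_left : I ∩ J ⊆ I)
            (restr (inter_subset_left : I ∩ J ⊆ I) x)) *
          (if restr (subset_union_left : I ⊆ I ∪ J) w = x
            then p' (restr (subset_union_right : J ⊆ I ∪ J) w) else 0) := by
      intro w
      split_ifs with h1
      · unfold adh
        rw [if_neg (by rw [key w h1]; exact hm), key w h1, h1]
        ring
      · simp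
    rw [Finset.sum_congr rfl (fun w _ => step w), ← Finset.mul_sum,
      sum_fiber_left x p']
    have : ∑ y : ↥J → V, (if restr (inter_subset_right : I ∩ J ⊆ J) y
        = restr (inter_subset_left : I ∩ J ⊆ I) x then p' y else 0)
        = marg p' (inter_subset_right : I ∩ J ⊆ J)
            (restr (inter_subset_left : I ∩ J ⊆ I) x) := rfl
    rw [this, ← hcons, div_mul_cancel₀ _ hm]

lemma margJ {I J : Finset ι} (p : (↥I → V) → ℝ) (p' : (↥J → V) → ℝ)
    (hq0 : ∀ w, 0 ≤ p' w)
    (hcons : marg p (inter_subset_left : I ∩ J ⊆ I) =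
             marg p' (inter_subset_right : I ∩ J ⊆ J)) :
    marg (adh p p') (subset_union_right : J ⊆ I ∪ J) = p' := by
  funext y
  have key : ∀ w : ↥(I ∪ J) → V, restr (subset_union_right : J ⊆ I ∪ J) w = y →
      restr ((inter_subset_left.trans subset_union_left) : I ∩ J ⊆ I ∪ J) w
        = restr (inter_subset_right : I ∩ J ⊆ J) y := by
    intro w hw; rw [← hw]; rfl
  by_cases hm : marg p (inter_subset_left : I ∩ J ⊆ I)
      (restr (inter_subset_right : I ∩ J ⊆ J) y) = 0
  · have hy : p' y = 0 := by
      have hm' : marg p' (inter_subset_right : I ∩ J ⊆ J)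
          (restr (inter_subset_right : I ∩ J ⊆ J) y) = 0 := by rw [← hcons]; exact hm
      exact marg_zero p' inter_subset_right hq0 hm' y rfl
    rw [hy]
    unfold marg
    apply Finset.sum_eq_zero
    intro w _
    split_ifs with h1
    · unfold adh
      rw [if_pos (by rw [key w h1]; exact hm)]
    · rfl
  · unfold marg
    have step : ∀ w : ↥(I ∪ J) → V,
        (if restr (subset_union_right : J ⊆ I ∪ J) w = y then adh p p' w else 0)
        = (p' y / marg p (inter_subset_left : I ∩ J ⊆ I)
            (restr (inter_subset_right : I ∩ J ⊆ J) y)) *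
          (if restr (subset_union_right : J ⊆ I ∪ J) w = y
            then p (restr (subset_union_left : I ⊆ I ∪ J) w) else 0) := by
      intro w
      split_ifs with h1
      · unfold adh
        rw [if_neg (by rw [key w h1]; exact hm), key w h1, h1]
        ring
      · simp
    rw [Finset.sum_congr rfl (fun w _ => step w), ← Finset.mul_sum,
      sum_fiber_right y p]
    have : ∑ x : ↥I → V, (if restr (inter_subset_left : I ∩ J ⊆ I) x
        = restr (inter_subset_right : I ∩ J ⊆ J) y then p x else 0)
        = marg p (inter_subset_left : I ∩ J ⊆ I)
            (restr (inter_subset_right : I ∩ J ⊆ J) y) := rfl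
    rw [this, div_mul_cancel₀ _ hm]


/-- The adhesive extension `P = adh p p'` satisfies the conditional independence
`(X_{I∖J} ⊥ X_{J∖I} | X_{I∩J})`: it factorizes as
`P(x_{I∖J}, x_{J∖I}, x_{I∩J}) = P(x_{I∖J}|x_{I∩J}) · P(x_{J∖I}|x_{I∩J}) · P(x_{I∩J})`,
where, since `(I∖J) ∪ (I∩J) = I` and `(J∖I) ∪ (I∩J) = J`, the conditionals are
`P(x_{I∖J}|x_{I∩J}) = P_I(x_I)/P_{I∩J}(x_{I∩J})` and
`P(x_{J∖I}|x_{I∩J}) = P_J(x_J)/P_{I∩J}(x_{I∩J})`. -/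
theorem adhesive_extension_conditional_independence {I J : Finset ι}
    (p : (↥I → V) → ℝ) (p' : (↥J → V) → ℝ)
    (hp0 : ∀ w, 0 ≤ p w) (hp1 : ∑ w, p w = 1)
    (hq0 : ∀ w, 0 ≤ p' w) (hq1 : ∑ w, p' w = 1)
    (hcons : marg p (inter_subset_left : I ∩ J ⊆ I) =
             marg p' (inter_subset_right : I ∩ J ⊆ J)) :
    ∀ w : ↥(I ∪ J) → V,
      adh p p' w =
        (marg (adh p p') (subset_union_left : I ⊆ I ∪ J)
            (restr (subset_union_left : I ⊆ I ∪ J) w) /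
          marg (adh p p') ((inter_subset_left.trans subset_union_left) : I ∩ J ⊆ I ∪ J)
            (restr ((inter_subset_left.trans subset_union_left) : I ∩ J ⊆ I ∪ J) w)) *
        (marg (adh p p') (subset_union_right : J ⊆ I ∪ J)
            (restr (subset_union_right : J ⊆ I ∪ J) w) /
          marg (adh p p') ((inter_subset_left.trans subset_union_left) : I ∩ J ⊆ I ∪ J)
            (restr ((inter_subset_left.trans subset_union_left) : I ∩ J ⊆ I ∪ J) w)) *
        marg (adh p p') ((inter_subset_left.trans subset_union_left) : I ∩ J ⊆ I ∪ J)
          (restr ((inter_subset_left.trans subset_union_left) : I ∩ J ⊆ I ∪ J) w) := by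
  intro w
  have hIJ : marg (adh p p') ((inter_subset_left.trans subset_union_left) : I ∩ J ⊆ I ∪ J)
      = marg p (inter_subset_left : I ∩ J ⊆ I) := by
    rw [← marg_marg (adh p p') (subset_union_left : I ⊆ I ∪ J)
      (inter_subset_left : I ∩ J ⊆ I), margI p p' hp0 hcons]
  rw [margI p p' hp0 hcons, margJ p p' hq0 hcons, hIJ]
  have hres : restr ((inter_subset_left.trans subset_union_left) : I ∩ J ⊆ I ∪ J) w
      = restr (inter_subset_left : I ∩ J ⊆ I)
          (restr (subset_union_left : I ⊆ I ∪ J) w) := rfl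
  unfold adh
  split_ifs with hm
  · rw [hm]; ring
  · field_simp
end

section
/- If a hypergraph with hyperedges E_1,…,E_n has the running intersection property with respect to the ordering E_1,…,E_n, and marginal probability distributions P_{E_i} are given on each E_i that are pairwise consistent (their marginals on intersections agree), then there exists a joint probability distribution P on E_1 ∪ … ∪ E_n whose marginal on each E_i equals P_{E_i}. -/
/-!
Induct on the number of edges. Given a joint distribution `Q'` on `T' = E₀ ∪ … ∪ E_{k-1}`
with the prescribed marginals, glue it to `P_k` along `S = E_k ∩ T'` by the conditional product
`Q'(w|T') · P_k(w|E_k) / m(w|S)`, which has marginals `Q'` and `P_k` as soon as `Q'` and `P_k`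
have the same marginal `m` on `S`. The running intersection property puts `S` inside a single
earlier edge `E_j`, and there both marginals agree with that of `P_j`, by consistency.
-/

open Finset

variable {ι V : Type} [DecidableEq ι] [Fintype V] [DecidableEq V]

/-- The running intersection property for the ordered edge list `E 0, …, E (n-1)`. -/
def RIP {n : ℕ} (E : Fin n → Finset ι) : Prop :=
  ∀ i : Fin n, 0 < (i : ℕ) →
    ∃ j : Fin n, j < i ∧
      E i ∩ ((Finset.univ.filter (fun k : Fin n => k < i)).biUnion E) ⊆ E j

section Marginals

variable {S T X : Finset ι}

def glue (z : ↥T → V) (u : ↥(S \ T) → V) : ↥S → V :=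
  fun i => if hi : i.1 ∈ T then z ⟨i.1, hi⟩ else u ⟨i.1, mem_sdiff.2 ⟨i.2, hi⟩⟩

omit [Fintype V] [DecidableEq V] in
theorem restr_glue_of_subset (hXT : X ⊆ T) (hXS : X ⊆ S)
    (z : ↥T → V) (u : ↥(S \ T) → V) : restr hXS (glue z u) = restr hXT z := by
  funext x
  simp [restr, glue, hXT x.2]

omit [Fintype V] [DecidableEq V] in
theorem restr_glue (h : T ⊆ S) (z : ↥T → V) (u : ↥(S \ T) → V) :
    restr h (glue z u) = z :=
  restr_glue_of_subset Subset.rfl h z u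

def glueEquiv (h : T ⊆ S) : (↥T → V) × (↥(S \ T) → V) ≃ (↥S → V) where
  toFun x := glue x.1 x.2
  invFun w := (restr h w, restr sdiff_subset w)
  left_inv x := by
    refine Prod.ext (restr_glue h x.1 x.2) ?_
    funext i
    simp [restr, glue, (mem_sdiff.1 i.2).2]
  right_inv w := by
    funext x
    by_cases hx : x.1 ∈ T <;> simp [glue, restr, hx]

theorem marg_apply (p : (↥S → V) → ℝ) (h : T ⊆ S) (z : ↥T → V) :
    marg p h z = ∑ u : ↥(S \ T) → V, p (glue z u) := by
  simp only [marg]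
  rw [← (glueEquiv h).sum_comp, Fintype.sum_prod_type]
  simp [glueEquiv, restr_glue]

theorem marg_apply_of_isEmpty [IsEmpty ↥T] (p : (↥S → V) → ℝ) (h : T ⊆ S) (z : ↥T → V) :
    marg p h z = ∑ w, p w :=
  sum_congr rfl fun _ _ => if_pos (Subsingleton.elim _ _)

theorem sum_marg (p : (↥S → V) → ℝ) (h : T ⊆ S) : ∑ z, marg p h z = ∑ w, p w := by
  simp only [marg]
  rw [sum_comm]
  simp

theorem marg_nonneg {p : (↥S → V) → ℝ} (hp : ∀ w, 0 ≤ p w) (h : T ⊆ S) (z : ↥T → V) :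
    0 ≤ marg p h z :=
  sum_nonneg fun w _ => by split <;> simp [hp w]

theorem le_marg_restr {p : (↥S → V) → ℝ} (hp : ∀ w, 0 ≤ p w) (h : T ⊆ S) (w : ↥S → V) :
    p w ≤ marg p h (restr h w) := by
  simpa [marg] using single_le_sum (f := fun w' => if restr h w' = restr h w then p w' else 0)
    (fun w' _ => by split <;> simp [hp w']) (mem_univ w)

theorem marg_marg_s9 (p : (↥S → V) → ℝ) (hTS : T ⊆ S) (hXT : X ⊆ T) :
    marg (marg p hTS) hXT = marg p (hXT.trans hTS) := by
  funext z
  simp only [marg, ← sum_filter]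
  rw [sum_fiberwise_eq_sum_filter]
  simp only [mem_filter, mem_univ, true_and]
  rfl

end Marginals

section Gluing

variable {U A B S : Finset ι}

theorem sum_glue_restr (hB : B ⊆ U) (hU : U ⊆ A ∪ B) (hSA : S ⊆ A) (hSB : S ⊆ B)
    (hAB : A ∩ B ⊆ S) (f : (↥B → V) → ℝ) (z : ↥A → V) :
    ∑ u : ↥(U \ A) → V, f (restr hB (glue z u)) = marg f hSB (restr hSA z) := by
  have hD : U \ A = B \ S := by
    ext x
    simp only [mem_sdiff]
    exact ⟨fun ⟨hx, hxA⟩ => ⟨(mem_union.1 (hU hx)).resolve_left hxA, fun hxS => hxA (hSA hxS)⟩,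
      fun ⟨hxB, hxS⟩ => ⟨hB hxB, fun hxA => hxS (hAB (mem_inter.2 ⟨hxA, hxB⟩))⟩⟩
  rw [marg_apply]
  refine Fintype.sum_equiv
    ((Equiv.subtypeEquivRight fun x => by rw [hD]).arrowCongr (Equiv.refl V)) _ _ fun u => ?_
  congr 1
  funext x
  by_cases hxS : x.1 ∈ S
  · simp [restr, glue, hxS, hSA hxS]
  · have hxA : x.1 ∉ A := fun hxA => hxS (hAB (mem_inter.2 ⟨hxA, x.2⟩))
    simp only [restr, glue, hxA, hxS, dite_false, Equiv.arrowCongr_apply, Equiv.coe_refl]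
    rfl

/-- Meant for `m` the common marginal of `p` and `q` on `S`: where `m` vanishes so do `p` and `q`,
so the junk value `x / 0 = 0` is the right one. -/
noncomputable def condProd (hA : A ⊆ U) (hB : B ⊆ U) (hS : S ⊆ U) (p : (↥A → V) → ℝ)
    (q : (↥B → V) → ℝ) (m : (↥S → V) → ℝ) : (↥U → V) → ℝ :=
  fun w => p (restr hA w) * q (restr hB w) / m (restr hS w)

omit [DecidableEq ι] [Fintype V] [DecidableEq V] in
theorem condProd_comm (hA : A ⊆ U) (hB : B ⊆ U) (hS : S ⊆ U) (p : (↥A → V) → ℝ)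
    (q : (↥B → V) → ℝ) (m : (↥S → V) → ℝ) :
    condProd hA hB hS p q m = condProd hB hA hS q p m := by
  funext w
  simp only [condProd, mul_comm]

theorem marg_condProd_left (hA : A ⊆ U) (hB : B ⊆ U) (hS : S ⊆ U) (hU : U ⊆ A ∪ B)
    (hSA : S ⊆ A) (hSB : S ⊆ B) (hAB : A ∩ B ⊆ S) {p : (↥A → V) → ℝ} {q : (↥B → V) → ℝ}
    {m : (↥S → V) → ℝ} (hp : ∀ w, 0 ≤ p w) (hpm : marg p hSA = m) (hqm : marg q hSB = m) :
    marg (condProd hA hB hS p q m) hA = p := by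
  funext z
  have hzm : m (restr hSA z) = 0 → p z = 0 := fun h =>
    le_antisymm (h ▸ hpm ▸ le_marg_restr hp hSA z) (hp z)
  calc marg (condProd hA hB hS p q m) hA z
      = ∑ u : ↥(U \ A) → V, p z * q (restr hB (glue z u)) / m (restr hSA z) := by
        simp only [marg_apply, condProd, restr_glue, restr_glue_of_subset hSA hS]
    _ = p z * m (restr hSA z) / m (restr hSA z) := by
        rw [← sum_div, ← mul_sum, sum_glue_restr hB hU hSA hSB hAB, hqm]
    _ = p z := by
        by_cases hm : m (restr hSA z) = 0
        · simp [hm, hzm hm]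
        · exact mul_div_cancel_right₀ _ hm

theorem marg_condProd_right (hA : A ⊆ U) (hB : B ⊆ U) (hS : S ⊆ U) (hU : U ⊆ A ∪ B)
    (hSA : S ⊆ A) (hSB : S ⊆ B) (hAB : A ∩ B ⊆ S) {p : (↥A → V) → ℝ} {q : (↥B → V) → ℝ}
    {m : (↥S → V) → ℝ} (hq : ∀ w, 0 ≤ q w) (hpm : marg p hSA = m) (hqm : marg q hSB = m) :
    marg (condProd hA hB hS p q m) hB = q := by
  rw [condProd_comm]
  exact marg_condProd_left hB hA hS (union_comm A B ▸ hU) hSB hSA (inter_comm A B ▸ hAB) hq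
    hqm hpm

theorem exists_marg_eq_of_marg_eq (hA : A ⊆ U) (hB : B ⊆ U) (hU : U ⊆ A ∪ B) (hSA : S ⊆ A)
    (hSB : S ⊆ B) (hAB : A ∩ B ⊆ S) {p : (↥A → V) → ℝ} {q : (↥B → V) → ℝ}
    (hp : ∀ w, 0 ≤ p w) (hq : ∀ w, 0 ≤ q w) (hpq : marg p hSA = marg q hSB) :
    ∃ Q : (↥U → V) → ℝ, (∀ w, 0 ≤ Q w) ∧ marg Q hA = p ∧ marg Q hB = q := by
  refine ⟨condProd hA hB (hSA.trans hA) p q (marg p hSA), fun w => ?_,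
    marg_condProd_left hA hB _ hU hSA hSB hAB hp rfl hpq.symm,
    marg_condProd_right hA hB _ hU hSA hSB hAB hq rfl hpq.symm⟩
  exact div_nonneg (mul_nonneg (hp _) (hq _)) (marg_nonneg hp hSA _)

theorem marg_eq_of_marg_inter_eq {T X : Finset ι} {Q : (↥T → V) → ℝ} {p : (↥A → V) → ℝ}
    {q : (↥B → V) → ℝ} (hBT : B ⊆ T) (hQ : marg Q hBT = q)
    (hpq : marg p inter_subset_left = marg q inter_subset_right)
    (hXA : X ⊆ A) (hXB : X ⊆ B) (hXT : X ⊆ T) : marg Q hXT = marg p hXA := by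
  have hX : X ⊆ A ∩ B := subset_inter hXA hXB
  calc marg Q hXT = marg q hXB := by rw [← hQ, marg_marg_s9]
    _ = marg p hXA := by rw [← marg_marg_s9 q inter_subset_right hX, ← hpq, marg_marg_s9]

end Gluing

section PrefixUnion

variable {n : ℕ} (E : Fin n → Finset ι)

def prefixUnion (k : ℕ) : Finset ι :=
  (univ.filter fun j : Fin n => (j : ℕ) < k).biUnion E

theorem prefixUnion_zero : prefixUnion E 0 = ∅ := by
  simp [prefixUnion]

theorem prefixUnion_succ {k : ℕ} (hk : k < n) :
    prefixUnion E (k + 1) = prefixUnion E k ∪ E ⟨k, hk⟩ := by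
  ext x
  simp only [prefixUnion, mem_union, mem_biUnion, mem_filter, mem_univ, true_and]
  constructor
  · rintro ⟨j, hj, hx⟩
    rcases Nat.lt_succ_iff_lt_or_eq.1 hj with hj | hj
    · exact Or.inl ⟨j, hj, hx⟩
    · exact Or.inr ((Fin.ext hj : j = ⟨k, hk⟩) ▸ hx)
  · rintro (⟨j, hj, hx⟩ | hx)
    · exact ⟨j, hj.trans k.lt_succ_self, hx⟩
    · exact ⟨_, k.lt_succ_self, hx⟩

theorem prefixUnion_eq_biUnion : prefixUnion E n = univ.biUnion E := by
  simp [prefixUnion]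

theorem subset_prefixUnion {k : ℕ} {j : Fin n} (hj : (j : ℕ) < k) : E j ⊆ prefixUnion E k :=
  subset_biUnion_of_mem E (mem_filter.2 ⟨mem_univ j, hj⟩)

theorem RIP.exists_inter_prefixUnion_subset {E : Fin n → Finset ι} (hRIP : RIP E) {k : ℕ}
    (hk : k < n) (hk0 : 0 < k) :
    ∃ j : Fin n, (j : ℕ) < k ∧ E ⟨k, hk⟩ ∩ prefixUnion E k ⊆ E j :=
  hRIP ⟨k, hk⟩ hk0

end PrefixUnion

section Extension

variable {n : ℕ} {E : Fin n → Finset ι} {P : (i : Fin n) → ((↥(E i) → V) → ℝ)}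

theorem marg_inter_prefixUnion_eq (hRIP : RIP E) (h1 : ∀ i, ∑ w, P i w = 1)
    (hcons : ∀ i j : Fin n,
      marg (P i) (inter_subset_left : E i ∩ E j ⊆ E i) =
      marg (P j) (inter_subset_right : E i ∩ E j ⊆ E j))
    {k : ℕ} (hk : k < n) {Q : (↥(prefixUnion E k) → V) → ℝ} (hQ1 : ∑ w, Q w = 1)
    (hQP : ∀ j : Fin n, (hj : (j : ℕ) < k) → marg Q (subset_prefixUnion E hj) = P j) :
    marg Q (inter_subset_right : E ⟨k, hk⟩ ∩ prefixUnion E k ⊆ prefixUnion E k) =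
      marg (P ⟨k, hk⟩) inter_subset_left := by
  rcases Nat.eq_zero_or_pos k with rfl | hk0
  · have : IsEmpty ↥(E ⟨0, hk⟩ ∩ prefixUnion E 0) :=
      ⟨fun x => by simpa [prefixUnion_zero] using x.2⟩
    funext z
    rw [marg_apply_of_isEmpty, marg_apply_of_isEmpty, hQ1, h1]
  · obtain ⟨j, hj, hsub⟩ := hRIP.exists_inter_prefixUnion_subset hk hk0
    exact marg_eq_of_marg_inter_eq (subset_prefixUnion E hj) (hQP j hj) (hcons _ j)
      inter_subset_left hsub inter_subset_right

/-- `T` is an abstract copy of `prefixUnion E k`, so that the distribution need not be transported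
along `prefixUnion_succ` and `prefixUnion_eq_biUnion`. -/
theorem exists_extension_prefixUnion (hRIP : RIP E) (h0 : ∀ i w, 0 ≤ P i w)
    (h1 : ∀ i, ∑ w, P i w = 1)
    (hcons : ∀ i j : Fin n,
      marg (P i) (inter_subset_left : E i ∩ E j ⊆ E i) =
      marg (P j) (inter_subset_right : E i ∩ E j ⊆ E j))
    {k : ℕ} (hk : k ≤ n) {T : Finset ι} (hT : T = prefixUnion E k) :
    ∃ Q : (↥T → V) → ℝ, (∀ w, 0 ≤ Q w) ∧ ∑ w, Q w = 1 ∧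
      ∀ i : Fin n, (i : ℕ) < k → ∀ h : E i ⊆ T, marg Q h = P i := by
  induction k generalizing T with
  | zero =>
    rw [prefixUnion_zero] at hT
    subst hT
    exact ⟨fun _ => 1, fun _ => zero_le_one, by simp, fun i hi => absurd hi i.val.not_lt_zero⟩
  | succ k ih =>
    have hkn : k < n := hk
    obtain ⟨Q', hQ'0, hQ'1, hQ'P⟩ := ih hkn.le rfl
    rw [prefixUnion_succ E hkn] at hT
    subst hT
    obtain ⟨Q, hQ0, hQQ', hQP⟩ := exists_marg_eq_of_marg_eq subset_union_left subset_union_right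
      Subset.rfl inter_subset_right inter_subset_left (inter_comm _ _).subset hQ'0 (h0 _)
      (marg_inter_prefixUnion_eq hRIP h1 hcons hkn hQ'1 fun j hj => hQ'P j hj _)
    refine ⟨Q, hQ0, by rw [← sum_marg Q subset_union_left, hQQ', hQ'1], fun i hi h => ?_⟩
    rcases Nat.lt_succ_iff_lt_or_eq.1 hi with hi | hi
    · rw [← hQ'P i hi (subset_prefixUnion E hi), ← hQQ', marg_marg_s9]
    · obtain rfl : i = ⟨k, hkn⟩ := Fin.ext hi
      exact hQP

end Extension

/-- **Vorob'ev's theorem.** If a hypergraph with hyperedges `E_1,…,E_n` has the running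
intersection property with respect to this ordering, and pairwise-consistent marginal
probability distributions `P_i` are given on each `E_i`, then there exists a joint
probability distribution on `E_1 ∪ … ∪ E_n` whose marginal on each `E_i` equals `P_i`. -/
theorem vorobev_extension {n : ℕ} (E : Fin n → Finset ι) (hRIP : RIP E)
    (P : (i : Fin n) → ((↥(E i) → V) → ℝ))
    (h0 : ∀ i w, 0 ≤ P i w) (h1 : ∀ i, ∑ w, P i w = 1)
    (hcons : ∀ i j : Fin n,
      marg (P i) (inter_subset_left : E i ∩ E j ⊆ E i) =
      marg (P j) (inter_subset_right : E i ∩ E j ⊆ E j)) :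
    ∃ Q : (↥(Finset.univ.biUnion E) → V) → ℝ,
      (∀ w, 0 ≤ Q w) ∧ (∑ w, Q w = 1) ∧
      ∀ i : Fin n,
        marg Q (Finset.subset_biUnion_of_mem E (Finset.mem_univ i)) = P i := by
  obtain ⟨Q, hQ0, hQ1, hQP⟩ :=
    exists_extension_prefixUnion hRIP h0 h1 hcons le_rfl (prefixUnion_eq_biUnion E).symm
  exact ⟨Q, hQ0, hQ1, fun i => hQP i i.isLt _⟩
end

section
/- Given any four probability distributions P_{xy} on pairs (A_x, B_y), x,y ∈ {1,2}, of finite random variables, such that all one-variable marginals are consistent (P_{11} and P_{12} agree on A₁, etc.), if there exist joint distributions Q₁ on (A₁,A₂,B₁) and Q₂ on (A₁,A₂,B₂) whose pairwise marginals reproduce P_{x1} and P_{x2} respectively, and Q₁ and Q₂ agree on (A₁,A₂), then there is a joint distribution on (A₁,A₂,B₁,B₂) reproducing all four P_{xy} and satisfying (B₁ ⊥ B₂ | A₁,A₂). -/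
open Finset

/-- **Fine/adhesivity decomposition of the CHSH scenario.** Given four probability
distributions `P_xy` on the pairs `(A_x, B_y)` with consistent one-variable marginals,
and joint distributions `Q₁` on `(A₁,A₂,B₁)` and `Q₂` on `(A₁,A₂,B₂)` reproducing the
pairwise marginals `P_x1` and `P_x2` respectively, if `Q₁` and `Q₂` agree on `(A₁,A₂)`
then there is a joint distribution on `(A₁,A₂,B₁,B₂)` reproducing all four `P_xy` and
satisfying the conditional independence `(B₁ ⊥ B₂ | A₁,A₂)`. -/
theorem chsh_adhesive_extension
    {A₁ A₂ B₁ B₂ : Type} [Fintype A₁] [Fintype A₂] [Fintype B₁] [Fintype B₂]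
    (P11 : A₁ × B₁ → ℝ) (P12 : A₁ × B₂ → ℝ) (P21 : A₂ × B₁ → ℝ) (P22 : A₂ × B₂ → ℝ)
    (hP0 : (∀ w, 0 ≤ P11 w) ∧ (∀ w, 0 ≤ P12 w) ∧ (∀ w, 0 ≤ P21 w) ∧ (∀ w, 0 ≤ P22 w))
    (hP1 : (∑ w, P11 w = 1) ∧ (∑ w, P12 w = 1) ∧ (∑ w, P21 w = 1) ∧ (∑ w, P22 w = 1))
    -- consistency of the one-variable marginals
    (hA1 : ∀ a₁, ∑ b₁, P11 (a₁, b₁) = ∑ b₂, P12 (a₁, b₂))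
    (hA2 : ∀ a₂, ∑ b₁, P21 (a₂, b₁) = ∑ b₂, P22 (a₂, b₂))
    (hB1 : ∀ b₁, ∑ a₁, P11 (a₁, b₁) = ∑ a₂, P21 (a₂, b₁))
    (hB2 : ∀ b₂, ∑ a₁, P12 (a₁, b₂) = ∑ a₂, P22 (a₂, b₂))
    -- the joint distributions on each triple (provided they exist)
    (Q₁ : A₁ × A₂ × B₁ → ℝ) (Q₂ : A₁ × A₂ × B₂ → ℝ)
    (hQ0 : (∀ w, 0 ≤ Q₁ w) ∧ (∀ w, 0 ≤ Q₂ w))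
    (hQ1 : (∑ w, Q₁ w = 1) ∧ (∑ w, Q₂ w = 1))
    (hQ₁11 : ∀ a₁ b₁, ∑ a₂, Q₁ (a₁, a₂, b₁) = P11 (a₁, b₁))
    (hQ₁21 : ∀ a₂ b₁, ∑ a₁, Q₁ (a₁, a₂, b₁) = P21 (a₂, b₁))
    (hQ₂12 : ∀ a₁ b₂, ∑ a₂, Q₂ (a₁, a₂, b₂) = P12 (a₁, b₂))
    (hQ₂22 : ∀ a₂ b₂, ∑ a₁, Q₂ (a₁, a₂, b₂) = P22 (a₂, b₂))
    -- Q₁ and Q₂ agree on (A₁,A₂)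
    (hQQ : ∀ a₁ a₂, ∑ b₁, Q₁ (a₁, a₂, b₁) = ∑ b₂, Q₂ (a₁, a₂, b₂)) :
    ∃ R : A₁ × A₂ × B₁ × B₂ → ℝ,
      (∀ w, 0 ≤ R w) ∧ (∑ w, R w = 1) ∧
      (∀ a₁ b₁, ∑ a₂, ∑ b₂, R (a₁, a₂, b₁, b₂) = P11 (a₁, b₁)) ∧
      (∀ a₁ b₂, ∑ a₂, ∑ b₁, R (a₁, a₂, b₁, b₂) = P12 (a₁, b₂)) ∧
      (∀ a₂ b₁, ∑ a₁, ∑ b₂, R (a₁, a₂, b₁, b₂) = P21 (a₂, b₁)) ∧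
      (∀ a₂ b₂, ∑ a₁, ∑ b₁, R (a₁, a₂, b₁, b₂) = P22 (a₂, b₂)) ∧
      -- conditional independence (B₁ ⊥ B₂ | A₁, A₂)
      (∀ a₁ a₂ b₁ b₂,
        R (a₁, a₂, b₁, b₂) =
          ((∑ b₂', R (a₁, a₂, b₁, b₂')) / (∑ b₁', ∑ b₂', R (a₁, a₂, b₁', b₂'))) *
          ((∑ b₁', R (a₁, a₂, b₁', b₂)) / (∑ b₁', ∑ b₂', R (a₁, a₂, b₁', b₂'))) *
          (∑ b₁', ∑ b₂', R (a₁, a₂, b₁', b₂'))) := by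

  obtain ⟨h10, h20⟩ := hQ0
  set m : A₁ → A₂ → ℝ := fun a₁ a₂ => ∑ b₁, Q₁ (a₁, a₂, b₁) with hm
  have hQ1zero : ∀ a₁ a₂, m a₁ a₂ = 0 → ∀ b₁, Q₁ (a₁, a₂, b₁) = 0 := by
    intro a₁ a₂ h b₁
    exact (Finset.sum_eq_zero_iff_of_nonneg (fun x _ => h10 (a₁, a₂, x))).mp h b₁
      (Finset.mem_univ _)
  have hQ2zero : ∀ a₁ a₂, m a₁ a₂ = 0 → ∀ b₂, Q₂ (a₁, a₂, b₂) = 0 := by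
    intro a₁ a₂ h b₂
    have h2 : ∑ b₂, Q₂ (a₁, a₂, b₂) = 0 := by rw [← hQQ]; exact h
    exact (Finset.sum_eq_zero_iff_of_nonneg (fun x _ => h20 (a₁, a₂, x))).mp h2 b₂
      (Finset.mem_univ _)
  set R : A₁ × A₂ × B₁ × B₂ → ℝ :=
    fun w => Q₁ (w.1, w.2.1, w.2.2.1) * Q₂ (w.1, w.2.1, w.2.2.2) / m w.1 w.2.1 with hR
  have hsb2 : ∀ a₁ a₂ b₁, ∑ b₂, R (a₁, a₂, b₁, b₂) = Q₁ (a₁, a₂, b₁) := by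
    intro a₁ a₂ b₁
    by_cases h : m a₁ a₂ = 0
    · simp only [hR, h, div_zero, Finset.sum_const_zero]
      exact (hQ1zero a₁ a₂ h b₁).symm
    · simp only [hR]
      rw [← Finset.sum_div, ← Finset.mul_sum, ← hQQ]
      exact mul_div_cancel_right₀ _ h
  have hsb1 : ∀ a₁ a₂ b₂, ∑ b₁, R (a₁, a₂, b₁, b₂) = Q₂ (a₁, a₂, b₂) := by
    intro a₁ a₂ b₂
    by_cases h : m a₁ a₂ = 0
    · simp only [hR, h, div_zero, Finset.sum_const_zero]
      exact (hQ2zero a₁ a₂ h b₂).symm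
    · simp only [hR]
      rw [← Finset.sum_div, ← Finset.sum_mul, mul_comm]
      exact mul_div_cancel_right₀ _ h
  have hsbb : ∀ a₁ a₂, ∑ b₁, ∑ b₂, R (a₁, a₂, b₁, b₂) = m a₁ a₂ := by
    intro a₁ a₂
    simp only [hsb2]
    rfl
  refine ⟨R, ?_, ?_, ?_, ?_, ?_, ?_, ?_⟩
  · intro w
    exact div_nonneg (mul_nonneg (h10 _) (h20 _)) (Finset.sum_nonneg fun _ _ => h10 _)
  · rw [← hQ1.1]
    simp only [Fintype.sum_prod_type, hsb2]
  · intro a₁ b₁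
    simp only [hsb2, hQ₁11]
  · intro a₁ b₂
    have : ∀ a₂, ∑ b₁, R (a₁, a₂, b₁, b₂) = Q₂ (a₁, a₂, b₂) := fun a₂ => hsb1 a₁ a₂ b₂
    simp only [this, hQ₂12]
  · intro a₂ b₁
    simp only [hsb2, hQ₁21]
  · intro a₂ b₂
    have : ∀ a₁, ∑ b₁, R (a₁, a₂, b₁, b₂) = Q₂ (a₁, a₂, b₂) := fun a₁ => hsb1 a₁ a₂ b₂
    simp only [this, hQ₂22]
  · intro a₁ a₂ b₁ b₂
    rw [hsb2, hsb1, hsbb]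
    by_cases h : m a₁ a₂ = 0
    · simp only [hR, h, div_zero, mul_zero]
    · show Q₁ (a₁, a₂, b₁) * Q₂ (a₁, a₂, b₂) / m a₁ a₂ = _
      field_simp
end

section
/- If f is a polymatroid on ground set N ∪ M that is modular on N and M, i.e., f(N∪M) = f(N) + f(M) − f(N∩M), then for all A ⊆ N∖M and B ⊆ M∖N, f(A ∪ B ∪ (N∩M)) + f(N∩M) = f(A ∪ (N∩M)) + f(B ∪ (N∩M)). -/
open Finset

/-!
Submodularity of `f` on `A ∪ I` and `B ∪ I`, where `I = N ∩ M`, gives one inequality. For the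
other, submodularity on the pairs `(A ∪ M, N)` and `(A ∪ B ∪ I, M)` chains to
`f (N ∪ M) + f (A ∪ I) + f (B ∪ I) ≤ f N + f M + f (A ∪ B ∪ I)`, and modularity of `(N, M)`
cancels `f (N ∪ M)` against `f N + f M - f I`. The set identities behind these steps are
instances of the modular law, so the argument works in any modular lattice.
-/

section ModularPair

theorem inf_eq_inf_of_inf_le_of_le {α : Type*} [Lattice α] {X Y X' Y' : α}
    (hX' : X ⊓ Y ≤ X') (hX'X : X' ≤ X) (hY' : X ⊓ Y ≤ Y') (hY'Y : Y' ≤ Y) : X' ⊓ Y' = X ⊓ Y :=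
  le_antisymm (inf_le_inf hX'X hY'Y) (le_inf hX' hY')

variable {α β : Type*} [Lattice α] [IsModularLattice α]
  [AddCommMonoid β] [PartialOrder β] [IsOrderedCancelAddMonoid β]

theorem add_inf_eq_add_of_modular_pair (f : α → β) {X Y X' Y' : α}
    (hsub : ∀ a b, a ≤ X ⊔ Y → b ≤ X ⊔ Y → f (a ⊔ b) + f (a ⊓ b) ≤ f a + f b)
    (hmod : f (X ⊔ Y) + f (X ⊓ Y) = f X + f Y)
    (hX' : X ⊓ Y ≤ X') (hX'X : X' ≤ X) (hY' : X ⊓ Y ≤ Y') (hY'Y : Y' ≤ Y) :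
    f (X' ⊔ Y') + f (X ⊓ Y) = f X' + f Y' := by
  have hX'Y : X' ⊓ Y = X ⊓ Y := inf_eq_inf_of_inf_le_of_le hX' hX'X inf_le_right le_rfl
  have hX : f (X ⊔ Y) + f X' ≤ f (X' ⊔ Y) + f X := by
    have h := hsub (X' ⊔ Y) X (sup_le_sup_right hX'X Y) le_sup_left
    rwa [sup_right_comm, sup_eq_right.mpr hX'X, sup_inf_assoc_of_le Y hX'X, inf_comm,
      sup_eq_left.mpr hX'] at h
  have hY : f (X' ⊔ Y) + f Y' ≤ f (X' ⊔ Y') + f Y := by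
    have h := hsub (X' ⊔ Y') Y (sup_le_sup hX'X hY'Y) le_sup_right
    rwa [sup_assoc, sup_eq_right.mpr hY'Y, sup_comm X' Y', sup_inf_assoc_of_le X' hY'Y, hX'Y,
      sup_eq_left.mpr hY', sup_comm Y' X'] at h
  refine le_antisymm ?_ (le_of_add_le_add_left (a := f (X ⊔ Y) + f (X' ⊔ Y)) ?_)
  · simpa only [inf_eq_inf_of_inf_le_of_le hX' hX'X hY' hY'Y] using
      hsub X' Y' (hX'X.trans le_sup_left) (hY'Y.trans le_sup_right)
  · calc f (X ⊔ Y) + f (X' ⊔ Y) + (f X' + f Y')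
        = (f (X ⊔ Y) + f X') + (f (X' ⊔ Y) + f Y') := by abel
      _ ≤ (f (X' ⊔ Y) + f X) + (f (X' ⊔ Y') + f Y) := add_le_add hX hY
      _ = f (X' ⊔ Y) + (f X + f Y) + f (X' ⊔ Y') := by abel
      _ = f (X ⊔ Y) + f (X' ⊔ Y) + (f (X' ⊔ Y') + f (X ⊓ Y)) := by rw [← hmod]; abel

end ModularPair

theorem polymatroid_modular_pair_conditional_independence_general
    {ι : Type} [DecidableEq ι] (N M : Finset ι) (f : Finset ι → ℝ)
    (hsub : ∀ A B : Finset ι, A ⊆ N ∪ M → B ⊆ N ∪ M →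
      f (A ∪ B) + f (A ∩ B) ≤ f A + f B)
    (hmod : f (N ∪ M) = f N + f M - f (N ∩ M)) :
    ∀ A B : Finset ι, A ⊆ N \ M → B ⊆ M \ N →
      f (A ∪ B ∪ (N ∩ M)) + f (N ∩ M) = f (A ∪ (N ∩ M)) + f (B ∪ (N ∩ M)) := by
  intro A B hA hB
  have hAN : A ∪ (N ∩ M) ⊆ N := union_subset (hA.trans sdiff_subset) inter_subset_left
  have hBM : B ∪ (N ∩ M) ⊆ M := union_subset (hB.trans sdiff_subset) inter_subset_right
  have hmod' : f (N ∪ M) + f (N ∩ M) = f N + f M := by rw [hmod]; ring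
  rw [union_union_distrib_right]
  exact add_inf_eq_add_of_modular_pair f hsub hmod' subset_union_right hAN subset_union_right hBM

/-- If `f` is a polymatroid on the ground set `N ∪ M` that is modular on `N` and `M`,
i.e. `f(N∪M) = f(N) + f(M) − f(N∩M)`, then for all `A ⊆ N∖M` and `B ⊆ M∖N`,
`f(A ∪ B ∪ (N∩M)) + f(N∩M) = f(A ∪ (N∩M)) + f(B ∪ (N∩M))`: all subsets of `N∖M` and
`M∖N` are conditionally independent (in polymatroid form) given `N∩M`. -/
theorem polymatroid_modular_pair_conditional_independence
    {ι : Type} [DecidableEq ι] (N M : Finset ι) (f : Finset ι → ℝ)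
    (hempty : f ∅ = 0)
    (hmono : ∀ A B : Finset ι, A ⊆ N ∪ M → B ⊆ N ∪ M → A ⊆ B → f A ≤ f B)
    (hsub : ∀ A B : Finset ι, A ⊆ N ∪ M → B ⊆ N ∪ M →
      f (A ∪ B) + f (A ∩ B) ≤ f A + f B)
    (hmod : f (N ∪ M) = f N + f M - f (N ∩ M)) :
    ∀ A B : Finset ι, A ⊆ N \ M → B ⊆ M \ N →
      f (A ∪ B ∪ (N ∩ M)) + f (N ∩ M) = f (A ∪ (N ∩ M)) + f (B ∪ (N ∩ M)) :=
  polymatroid_modular_pair_conditional_independence_general N M f hsub hmod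
end

section
/- In the information causality causal structure, where X₀ and X₁ are independent, M is a function of (X₀,X₁) possibly with independent local randomness, and (Y₀,Y₁) depend only on M (i.e., (X₀,X₁) ⊥ (Y₀,Y₁) | M), the inequality I(X₀:Y₀) + I(X₁:Y₁) ≤ H(M) holds, assuming additionally I(X₀:X₁)=0 and the data-processing structure I(X₀X₁ : Y₀Y₁ | M) = 0. -/
/-!
Every step is a Shannon inequality, i.e. an instance of `I(A:B|C) ≥ 0`. With `Y = (Y₀,Y₁)`,
`I(X₀:Y₀) + I(X₁:Y₁) ≤ I(X₀:Y) + I(X₁:Y,X₀) = I(X₀:Y) + I(X₁:Y|X₀) = I(X₀X₁:Y)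
  ≤ I(X₀X₁:Y,M) = I(X₀X₁:M) ≤ H(M)`,
where the first equality uses `I(X₀:X₁) = 0` and the last one the Markov condition.
`I(A:B|C) ≥ 0` itself is Gibbs' inequality comparing the joint law of `(A,B,C)` with the
conditionally independent coupling `p(a,c) p(b,c) / p(c)`.
-/

open Finset

/-- The marginal distribution (pushforward) of `P` along the map `f`. -/
noncomputable def margF {Ω α : Type} [Fintype Ω] [DecidableEq α]
    (P : Ω → ℝ) (f : Ω → α) : α → ℝ :=
  fun a => ∑ w, if f w = a then P w else 0

/-- Shannon entropy (in bits) of a finitely supported distribution. -/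
noncomputable def ent {α : Type} [Fintype α] (q : α → ℝ) : ℝ :=
  -∑ a, q a * Real.logb 2 (q a)

/-- Shannon entropy of the marginal of `P` on the variable(s) extracted by `f`. -/
noncomputable def Hof {Ω α : Type} [Fintype Ω] [Fintype α] [DecidableEq α]
    (P : Ω → ℝ) (f : Ω → α) : ℝ :=
  ent (margF P f)

/-- Conditional mutual information `I(A:B|C) = H(A,C) + H(B,C) − H(A,B,C) − H(C)` of the
variables extracted by `fA`, `fB` given those extracted by `fC`. -/
noncomputable def CMI {Ω A B C : Type} [Fintype Ω] [Fintype A] [Fintype B] [Fintype C]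
    [DecidableEq A] [DecidableEq B] [DecidableEq C]
    (P : Ω → ℝ) (fA : Ω → A) (fB : Ω → B) (fC : Ω → C) : ℝ :=
  Hof P (fun w => (fA w, fC w)) + Hof P (fun w => (fB w, fC w)) -
    Hof P (fun w => (fA w, fB w, fC w)) - Hof P fC

/-- Mutual information `I(A:B) = H(A) + H(B) − H(A,B)` of the variables extracted by
`fA` and `fB`. -/
noncomputable def MI {Ω A B : Type} [Fintype Ω] [Fintype A] [Fintype B]
    [DecidableEq A] [DecidableEq B] (P : Ω → ℝ) (fA : Ω → A) (fB : Ω → B) : ℝ :=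
  Hof P fA + Hof P fB - Hof P (fun w => (fA w, fB w))

section Marginals

variable {Ω : Type} [Fintype Ω] (P : Ω → ℝ)

lemma margF_nonneg {α : Type} [DecidableEq α] (h0 : ∀ w, 0 ≤ P w) (f : Ω → α) (a : α) :
    0 ≤ margF P f a :=
  Finset.sum_nonneg fun w _ => by split_ifs <;> simp [h0 w]

lemma le_margF_apply {α : Type} [DecidableEq α] (h0 : ∀ w, 0 ≤ P w) (f : Ω → α) (w : Ω) :
    P w ≤ margF P f (f w) := by
  have := Finset.single_le_sum (f := fun w' => if f w' = f w then P w' else 0)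
    (fun i _ => by split_ifs <;> simp [h0 i]) (Finset.mem_univ w)
  simpa [margF] using this

lemma sum_margF_mul {α : Type} [Fintype α] [DecidableEq α] (f : Ω → α) (G : α → ℝ) :
    ∑ a, margF P f a * G a = ∑ w, P w * G (f w) := by
  simp only [margF, Finset.sum_mul, ite_mul, zero_mul]
  rw [Finset.sum_comm]
  simp

lemma sum_margF {α : Type} [Fintype α] [DecidableEq α] (f : Ω → α) :
    ∑ a, margF P f a = ∑ w, P w := by
  simpa using sum_margF_mul P f 1

lemma sum_margF_prod_fst {α β : Type} [Fintype α] [DecidableEq α] [DecidableEq β]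
    (f : Ω → α) (g : Ω → β) (b : β) :
    ∑ a, margF P (fun w => (f w, g w)) (a, b) = margF P g b := by
  simp only [margF]
  rw [Finset.sum_comm]
  simp [Prod.mk.injEq, ite_and]

lemma margF_comp_of_injective {α β : Type} [DecidableEq α] [DecidableEq β] (f : Ω → α)
    {g : α → β} (hg : Function.Injective g) (a : α) :
    margF P (fun w => g (f w)) (g a) = margF P f a := by
  simp [margF, hg.eq_iff]

end Marginals

section Entropy

variable {Ω : Type} [Fintype Ω] (P : Ω → ℝ)

lemma Hof_eq_neg_sum {α : Type} [Fintype α] [DecidableEq α] (f : Ω → α) :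
    Hof P f = -∑ w, P w * Real.logb 2 (margF P f (f w)) := by
  rw [Hof, ent, sum_margF_mul P f fun a => Real.logb 2 (margF P f a)]

lemma Hof_comp_of_injective {α β : Type} [Fintype α] [DecidableEq α] [Fintype β]
    [DecidableEq β] (f : Ω → α) {g : α → β} (hg : Function.Injective g) :
    Hof P (fun w => g (f w)) = Hof P f := by
  simp only [Hof_eq_neg_sum, margF_comp_of_injective P f hg]

lemma Hof_prod_comm {α β : Type} [Fintype α] [DecidableEq α] [Fintype β] [DecidableEq β]
    (f : Ω → α) (g : Ω → β) :
    Hof P (fun w => (f w, g w)) = Hof P (fun w => (g w, f w)) :=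
  Hof_comp_of_injective P (fun w => (g w, f w)) Prod.swap_injective

end Entropy

/-- Gibbs' inequality, from `log r ≤ r - 1`. -/
lemma sum_mul_logb_nonpos {Ω : Type} [Fintype Ω] {P r : Ω → ℝ} {b : ℝ} (hb : 1 < b)
    (h0 : ∀ w, 0 ≤ P w) (hr : ∀ w, 0 < P w → 0 < r w)
    (hsum : ∑ w, P w * r w ≤ ∑ w, P w) :
    ∑ w, P w * Real.logb b (r w) ≤ 0 := by
  have hlogb : 0 < Real.log b := Real.log_pos hb
  have hterm : ∀ w, P w * Real.logb b (r w) ≤ (P w * r w - P w) / Real.log b := by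
    intro w
    rcases (h0 w).eq_or_lt with hP | hP
    · simp [← hP]
    · rw [Real.logb, le_div_iff₀ hlogb, mul_div_assoc', div_mul_cancel₀ _ hlogb.ne']
      nlinarith [Real.log_le_sub_one_of_pos (hr w hP)]
  calc ∑ w, P w * Real.logb b (r w)
      ≤ ∑ w, (P w * r w - P w) / Real.log b := Finset.sum_le_sum fun w _ => hterm w
    _ = (∑ w, P w * r w - ∑ w, P w) / Real.log b := by
        rw [← Finset.sum_div, Finset.sum_sub_distrib]
    _ ≤ 0 := div_nonpos_of_nonpos_of_nonneg (by linarith) hlogb.le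

section Information

variable {Ω : Type} [Fintype Ω] (P : Ω → ℝ)

lemma sum_margF_mul_margF_div_margF {A B C : Type} [Fintype A] [Fintype B] [Fintype C]
    [DecidableEq A] [DecidableEq B] [DecidableEq C] (fA : Ω → A) (fB : Ω → B) (fC : Ω → C) :
    ∑ v : A × B × C, margF P (fun w => (fA w, fC w)) (v.1, v.2.2) *
      margF P (fun w => (fB w, fC w)) (v.2.1, v.2.2) / margF P fC v.2.2 = ∑ w, P w := by
  calc _ = ∑ c, (∑ a, margF P (fun w => (fA w, fC w)) (a, c)) *
        (∑ b, margF P (fun w => (fB w, fC w)) (b, c)) / margF P fC c := by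
        simp only [Fintype.sum_prod_type, Finset.sum_mul_sum, Finset.sum_div]
        conv_rhs => rw [Finset.sum_comm]
        exact Finset.sum_congr rfl fun _ _ => Finset.sum_comm
    _ = ∑ w, P w := by simp only [sum_margF_prod_fst, mul_self_div_self, sum_margF]

/-- The ratio of the conditionally independent coupling to the joint law. -/
noncomputable def condIndepRatio {A B C : Type} [DecidableEq A] [DecidableEq B] [DecidableEq C]
    (fA : Ω → A) (fB : Ω → B) (fC : Ω → C) (v : A × B × C) : ℝ :=
  margF P (fun w => (fA w, fC w)) (v.1, v.2.2) * margF P (fun w => (fB w, fC w)) (v.2.1, v.2.2) /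
    (margF P (fun w => (fA w, fB w, fC w)) v * margF P fC v.2.2)

lemma condIndepRatio_pos {A B C : Type} [DecidableEq A] [DecidableEq B] [DecidableEq C]
    (h0 : ∀ w, 0 ≤ P w) (fA : Ω → A) (fB : Ω → B) (fC : Ω → C)
    {w : Ω} (hw : 0 < P w) : 0 < condIndepRatio P fA fB fC (fA w, fB w, fC w) := by
  have h1 := hw.trans_le (le_margF_apply P h0 (fun w => (fA w, fC w)) w)
  have h2 := hw.trans_le (le_margF_apply P h0 (fun w => (fB w, fC w)) w)
  have h3 := hw.trans_le (le_margF_apply P h0 (fun w => (fA w, fB w, fC w)) w)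
  have h4 := hw.trans_le (le_margF_apply P h0 fC w)
  rw [condIndepRatio]
  positivity

section CondIndepRatio

variable {A B C : Type} [Fintype A] [Fintype B] [Fintype C]
  [DecidableEq A] [DecidableEq B] [DecidableEq C]

lemma CMI_eq_neg_sum_logb_condIndepRatio (h0 : ∀ w, 0 ≤ P w)
    (fA : Ω → A) (fB : Ω → B) (fC : Ω → C) :
    CMI P fA fB fC = -∑ w, P w * Real.logb 2 (condIndepRatio P fA fB fC (fA w, fB w, fC w)) := by
  have hterm : ∀ w, P w * Real.logb 2 (condIndepRatio P fA fB fC (fA w, fB w, fC w)) =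
      P w * Real.logb 2 (margF P (fun w => (fA w, fC w)) (fA w, fC w)) +
        P w * Real.logb 2 (margF P (fun w => (fB w, fC w)) (fB w, fC w)) -
        P w * Real.logb 2 (margF P (fun w => (fA w, fB w, fC w)) (fA w, fB w, fC w)) -
        P w * Real.logb 2 (margF P fC (fC w)) := by
    intro w
    rcases (h0 w).eq_or_lt with hP | hP
    · simp [← hP]
    · have h1 := hP.trans_le (le_margF_apply P h0 (fun w => (fA w, fC w)) w)
      have h2 := hP.trans_le (le_margF_apply P h0 (fun w => (fB w, fC w)) w)
      have h3 := hP.trans_le (le_margF_apply P h0 (fun w => (fA w, fB w, fC w)) w)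
      have h4 := hP.trans_le (le_margF_apply P h0 fC w)
      rw [condIndepRatio, Real.logb_div (by positivity) (by positivity),
        Real.logb_mul h1.ne' h2.ne', Real.logb_mul h3.ne' h4.ne']
      ring
  simp only [CMI, Hof_eq_neg_sum, hterm, Finset.sum_add_distrib, Finset.sum_sub_distrib]
  ring

lemma sum_mul_condIndepRatio_le (h0 : ∀ w, 0 ≤ P w) (fA : Ω → A) (fB : Ω → B) (fC : Ω → C) :
    ∑ w, P w * condIndepRatio P fA fB fC (fA w, fB w, fC w) ≤ ∑ w, P w := calc
  _ = ∑ v, margF P (fun w => (fA w, fB w, fC w)) v * condIndepRatio P fA fB fC v :=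
    (sum_margF_mul P _ _).symm
  _ ≤ ∑ v : A × B × C, margF P (fun w => (fA w, fC w)) (v.1, v.2.2) *
      margF P (fun w => (fB w, fC w)) (v.2.1, v.2.2) / margF P fC v.2.2 := by
    gcongr with v
    rw [condIndepRatio, mul_div_assoc']
    rcases (margF_nonneg P h0 (fun w => (fA w, fB w, fC w)) v).eq_or_lt with hv | hv
    · rw [← hv, zero_mul, zero_mul, zero_div]
      exact div_nonneg (mul_nonneg (margF_nonneg P h0 _ _) (margF_nonneg P h0 _ _))
        (margF_nonneg P h0 _ _)
    · rw [mul_div_mul_left _ _ hv.ne']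
  _ = ∑ w, P w := sum_margF_mul_margF_div_margF P fA fB fC

lemma CMI_nonneg (h0 : ∀ w, 0 ≤ P w) (fA : Ω → A) (fB : Ω → B) (fC : Ω → C) :
    0 ≤ CMI P fA fB fC := by
  rw [CMI_eq_neg_sum_logb_condIndepRatio P h0, neg_nonneg]
  exact sum_mul_logb_nonpos one_lt_two h0 (fun w => condIndepRatio_pos P h0 fA fB fC)
    (sum_mul_condIndepRatio_le P h0 fA fB fC)

end CondIndepRatio

lemma MI_comm {A B : Type} [Fintype A] [Fintype B] [DecidableEq A] [DecidableEq B]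
    (f : Ω → A) (g : Ω → B) : MI P f g = MI P g f := by
  rw [MI, MI, Hof_prod_comm]
  ring

lemma MI_prod_right {A B C : Type} [Fintype A] [Fintype B] [Fintype C]
    [DecidableEq A] [DecidableEq B] [DecidableEq C] (f : Ω → A) (g : Ω → B) (h : Ω → C) :
    MI P f (fun w => (g w, h w)) = MI P f h + CMI P f g h := by
  rw [MI, MI, CMI]
  ring

lemma MI_prod_right_comm {A B C : Type} [Fintype A] [Fintype B] [Fintype C]
    [DecidableEq A] [DecidableEq B] [DecidableEq C] (f : Ω → A) (g : Ω → B) (h : Ω → C) :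
    MI P f (fun w => (g w, h w)) = MI P f (fun w => (h w, g w)) := by
  have hswap : Hof P (fun w => (f w, h w, g w)) = Hof P (fun w => (f w, g w, h w)) :=
    Hof_comp_of_injective P (fun w => (f w, g w, h w)) (g := fun x => (x.1, x.2.2, x.2.1))
      fun x y hxy => by simp_all [Prod.ext_iff]
  rw [MI, MI, Hof_prod_comm P g h, hswap]

lemma MI_prod_left {A B C : Type} [Fintype A] [Fintype B] [Fintype C]
    [DecidableEq A] [DecidableEq B] [DecidableEq C] (f : Ω → A) (g : Ω → B) (h : Ω → C) :
    MI P (fun w => (f w, g w)) h = MI P f h + CMI P g h f := by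
  have hassoc : Hof P (fun w => (g w, h w, f w)) = Hof P (fun w => ((f w, g w), h w)) :=
    Hof_comp_of_injective P (fun w => ((f w, g w), h w))
      (g := fun x => (x.1.2, x.2, x.1.1)) fun x y hxy => by simp_all [Prod.ext_iff]
  rw [MI, MI, CMI, hassoc, Hof_prod_comm P g f, Hof_prod_comm P h f]
  ring

/-- The conditional entropy `H(B|A) = H(A,B) - H(A)` is the self-information `I(B:B|A)`. -/
lemma CMI_self {A B : Type} [Fintype A] [Fintype B] [DecidableEq A] [DecidableEq B]
    (f : Ω → A) (g : Ω → B) :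
    CMI P g g f = Hof P (fun w => (f w, g w)) - Hof P f := by
  have hdup : Hof P (fun w => (g w, g w, f w)) = Hof P (fun w => (g w, f w)) :=
    Hof_comp_of_injective P (fun w => (g w, f w)) (g := fun x => (x.1, x.1, x.2))
      fun x y hxy => by simp_all [Prod.ext_iff]
  rw [CMI, hdup, Hof_prod_comm P f g]
  ring

variable {P}

lemma MI_le_Hof {A B : Type} [Fintype A] [Fintype B] [DecidableEq A] [DecidableEq B]
    (h0 : ∀ w, 0 ≤ P w) (f : Ω → A) (g : Ω → B) : MI P f g ≤ Hof P g := by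
  have := CMI_nonneg P h0 g g f
  rw [CMI_self] at this
  rw [MI]
  linarith

lemma MI_le_MI_prod_right {A B C : Type} [Fintype A] [Fintype B] [Fintype C]
    [DecidableEq A] [DecidableEq B] [DecidableEq C] (h0 : ∀ w, 0 ≤ P w)
    (f : Ω → A) (g : Ω → B) (h : Ω → C) :
    MI P f h ≤ MI P f (fun w => (g w, h w)) := by
  rw [MI_prod_right]
  linarith [CMI_nonneg P h0 f g h]

lemma MI_le_MI_prod_left {A B C : Type} [Fintype A] [Fintype B] [Fintype C]
    [DecidableEq A] [DecidableEq B] [DecidableEq C] (h0 : ∀ w, 0 ≤ P w)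
    (f : Ω → A) (g : Ω → B) (h : Ω → C) :
    MI P f g ≤ MI P f (fun w => (g w, h w)) := by
  rw [MI_prod_right_comm]
  exact MI_le_MI_prod_right h0 f h g

lemma MI_add_MI_le_Hof_of_markov {X₀ X₁ M Y₀ Y₁ : Type} [Fintype X₀] [Fintype X₁] [Fintype M]
    [Fintype Y₀] [Fintype Y₁] [DecidableEq X₀] [DecidableEq X₁] [DecidableEq M]
    [DecidableEq Y₀] [DecidableEq Y₁] (h0 : ∀ w, 0 ≤ P w)
    (x₀ : Ω → X₀) (x₁ : Ω → X₁) (m : Ω → M) (y₀ : Ω → Y₀) (y₁ : Ω → Y₁)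
    (hindep : MI P x₀ x₁ = 0)
    (hmarkov : CMI P (fun w => (x₀ w, x₁ w)) (fun w => (y₀ w, y₁ w)) m = 0) :
    MI P x₀ y₀ + MI P x₁ y₁ ≤ Hof P m := by
  set y := fun w => (y₀ w, y₁ w)
  set x := fun w => (x₀ w, x₁ w)
  calc MI P x₀ y₀ + MI P x₁ y₁
      ≤ MI P x₀ y + MI P x₁ (fun w => (y w, x₀ w)) :=
        add_le_add (MI_le_MI_prod_left h0 x₀ y₀ y₁)
          ((MI_le_MI_prod_right h0 x₁ y₀ y₁).trans (MI_le_MI_prod_left h0 x₁ y x₀))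
    _ = MI P x₀ y + CMI P x₁ y x₀ := by
        rw [MI_prod_right P x₁ y x₀, MI_comm P x₁ x₀, hindep, zero_add]
    _ = MI P x y := (MI_prod_left P x₀ x₁ y).symm
    _ ≤ MI P x (fun w => (y w, m w)) := MI_le_MI_prod_left h0 x y m
    _ = MI P x m := by rw [MI_prod_right P x y m, hmarkov, add_zero]
    _ ≤ Hof P m := MI_le_Hof h0 x m

end Information

theorem information_causality_general {TX₀ TX₁ TM TY₀ TY₁ : Type}
    [Fintype TX₀] [Fintype TX₁] [Fintype TM] [Fintype TY₀] [Fintype TY₁]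
    [DecidableEq TX₀] [DecidableEq TX₁] [DecidableEq TM] [DecidableEq TY₀] [DecidableEq TY₁]
    (P : TX₀ × TX₁ × TM × TY₀ × TY₁ → ℝ)
    (h0 : ∀ w, 0 ≤ P w)
    (hindep : MI P (fun w => w.1) (fun w => w.2.1) = 0)
    (hmarkov : CMI P (fun w => (w.1, w.2.1))
      (fun w => (w.2.2.2.1, w.2.2.2.2)) (fun w => w.2.2.1) = 0) :
    MI P (fun w => w.1) (fun w => w.2.2.2.1) +
      MI P (fun w => w.2.1) (fun w => w.2.2.2.2) ≤
      Hof P (fun w => w.2.2.1) :=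
  MI_add_MI_le_Hof_of_markov h0 _ _ _ _ _ hindep hmarkov

/-- **The information causality inequality.** For finite random variables
`X₀, X₁, M, Y₀, Y₁` with `X₀` and `X₁` independent, `I(X₀:X₁) = 0`, and the Markov
(data-processing) condition `(X₀,X₁) ⊥ (Y₀,Y₁) | M`, i.e. `I(X₀X₁:Y₀Y₁|M) = 0`, one has
`I(X₀:Y₀) + I(X₁:Y₁) ≤ H(M)`. -/
theorem information_causality {TX₀ TX₁ TM TY₀ TY₁ : Type}
    [Fintype TX₀] [Fintype TX₁] [Fintype TM] [Fintype TY₀] [Fintype TY₁]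
    [DecidableEq TX₀] [DecidableEq TX₁] [DecidableEq TM] [DecidableEq TY₀] [DecidableEq TY₁]
    (P : TX₀ × TX₁ × TM × TY₀ × TY₁ → ℝ)
    (h0 : ∀ w, 0 ≤ P w) (h1 : ∑ w, P w = 1)
    (hindep : MI P (fun w => w.1) (fun w => w.2.1) = 0)
    (hmarkov : CMI P (fun w => (w.1, w.2.1))
      (fun w => (w.2.2.2.1, w.2.2.2.2)) (fun w => w.2.2.1) = 0) :
    MI P (fun w => w.1) (fun w => w.2.2.2.1) +
      MI P (fun w => w.2.1) (fun w => w.2.2.2.2) ≤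
      Hof P (fun w => w.2.2.1) :=
  information_causality_general P h0 hindep hmarkov
end
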